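/- arXiv:1102.3318 — 4 statements merged into one kernel-verified Lean document; each statement's English description precedes it below -/
import Mathlib

section
/- Let 0 ≤ α, β < 1 be reals with α + β ≤ 1, and set γ := 1 - α - β (so α + β + γ = 1 and γ ≥ 0). Let ξ be a binomial random variable with parameters (m, α) and η an independent binomial random variable with parameters (n, 1-β), and set S := ξ + η. Then G(m,n;α,β,γ) = P(S = m), where G(m,n;α,β,γ) := ∑_{r=0}^{min(m,n)} (m+n-r)! / ((m-r)!(n-r)! r!) α^{m-r} β^{n-r} γ^r. -/
open Finset

private lemma choose_vandermonde (m n r : ℕ) (hrm : r ≤ m) (hrn : r ≤ n) :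
    ∑ j ∈ range (m + 1), m.choose j * n.choose j * j.choose r
      = m.choose r * (m + n - r).choose m := by
  have h1 : ∑ j ∈ range (m + 1), m.choose j * n.choose j * j.choose r
      = ∑ j ∈ Finset.Ico r (m + 1), m.choose j * n.choose j * j.choose r := by
    refine (Finset.sum_subset ?_ ?_).symm
    · intro j hj; simp only [Finset.mem_Ico] at hj; exact Finset.mem_range.2 hj.2
    · intro j hj hj'
      simp only [Finset.mem_range] at hj
      simp only [Finset.mem_Ico, not_and, not_lt] at hj'
      have : j < r := by omega
      rw [Nat.choose_eq_zero_of_lt this, Nat.mul_zero]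
  rw [h1, Finset.sum_Ico_eq_sum_range]
  have h2 : ∀ i ∈ range (m + 1 - r),
      m.choose (r + i) * n.choose (r + i) * (r + i).choose r
        = m.choose r * ((m - r).choose i * n.choose (r + i)) := by
    intro i hi
    have hi' : r + i ≤ m := by simp only [Finset.mem_range] at hi; omega
    have hcm := Nat.choose_mul (n := m) (Nat.le_add_right r i)
    have h3 : (r + i) - r = i := by omega
    rw [h3] at hcm
    rw [mul_right_comm, hcm]; ring
  rw [Finset.sum_congr rfl h2, ← Finset.mul_sum]
  congr 1
  have hmr : m + n - r = (m - r) + n := by omega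
  rw [hmr]
  have hm_le : m ≤ (m - r) + n := by omega
  have hsym : ((m - r) + n).choose m = ((m - r) + n).choose (n - r) := by
    rw [← Nat.choose_symm hm_le]; congr 1; omega
  rw [hsym, Nat.add_choose_eq, Finset.Nat.sum_antidiagonal_eq_sum_range_succ_mk]
  have hswap : ∀ p ∈ range (n - r + 1), (m - r).choose p * n.choose (n - r - p)
      = (m - r).choose p * n.choose (r + p) := by
    intro p hp
    simp only [Finset.mem_range] at hp
    have hp' : r + p ≤ n := by omega
    have he : n - r - p = n - (r + p) := by omega
    rw [he, Nat.choose_symm hp']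
  rw [Finset.sum_congr rfl hswap]
  have e1 : ∑ i ∈ range (m + 1 - r), (m - r).choose i * n.choose (r + i)
      = ∑ i ∈ range (m + n + 1), (m - r).choose i * n.choose (r + i) := by
    apply Finset.sum_subset (Finset.range_subset_range.2 (by omega))
    intro i hi hi'
    simp only [Finset.mem_range] at hi hi'
    rw [Nat.choose_eq_zero_of_lt (show m - r < i by omega), Nat.zero_mul]
  have e2 : ∑ i ∈ range (n - r + 1), (m - r).choose i * n.choose (r + i)
      = ∑ i ∈ range (m + n + 1), (m - r).choose i * n.choose (r + i) := by
    apply Finset.sum_subset (Finset.range_subset_range.2 (by omega))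
    intro i hi hi'
    simp only [Finset.mem_range] at hi hi'
    rw [Nat.choose_eq_zero_of_lt (show n < r + i by omega), Nat.mul_zero]
  rw [e1, e2]

private lemma factorial_div_eq (m n r : ℕ) (hrm : r ≤ m) (hrn : r ≤ n) :
    ((m + n - r).factorial : ℝ) /
      ((m - r).factorial * (n - r).factorial * r.factorial)
      = (m.choose r : ℝ) * ((m + n - r).choose m : ℝ) := by
  have hden : ((m - r).factorial : ℝ) * (n - r).factorial * r.factorial ≠ 0 := by
    positivity
  rw [div_eq_iff hden]
  have h1 : m.choose r * r.factorial * (m - r).factorial = m.factorial :=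
    Nat.choose_mul_factorial_mul_factorial hrm
  have hm : m ≤ m + n - r := by omega
  have h2 : (m + n - r).choose m * m.factorial * (m + n - r - m).factorial
      = (m + n - r).factorial := Nat.choose_mul_factorial_mul_factorial hm
  have h3 : m + n - r - m = n - r := by omega
  rw [h3] at h2
  have hnat : m.choose r * (m + n - r).choose m *
      ((m - r).factorial * (n - r).factorial * r.factorial) = (m + n - r).factorial := by
    calc m.choose r * (m + n - r).choose m *
        ((m - r).factorial * (n - r).factorial * r.factorial)
        = (m + n - r).choose m * (m.choose r * r.factorial * (m - r).factorial) *
            (n - r).factorial := by ring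
      _ = (m + n - r).choose m * m.factorial * (n - r).factorial := by rw [h1]
      _ = (m + n - r).factorial := h2
  rw [← hnat]; push_cast; ring

/-- `G(m,n;α,β,γ) = ∑_{r=0}^{min(m,n)} (m+n-r)! / ((m-r)!(n-r)! r!) α^{m-r} β^{n-r} γ^r`. -/
noncomputable def G (m n : ℕ) (α β γ : ℝ) : ℝ :=
  ∑ r ∈ Finset.range (min m n + 1),
    (Nat.factorial (m + n - r) : ℝ) /
      ((Nat.factorial (m - r) : ℝ) * (Nat.factorial (n - r) : ℝ) * (Nat.factorial r : ℝ)) *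
      α ^ (m - r) * β ^ (n - r) * γ ^ r

/-- Probability mass function of a `Binomial(k, p)` random variable at `j`. -/
noncomputable def binomPMF (k : ℕ) (p : ℝ) (j : ℕ) : ℝ :=
  (Nat.choose k j : ℝ) * p ^ j * (1 - p) ^ (k - j)

/-- Binomial representation: for `0 ≤ α, β < 1` with `γ = 1 - α - β ≥ 0`,
`G(m,n;α,β,γ) = P(ξ + η = m)`, where `ξ ~ Binomial(m, α)` and `η ~ Binomial(n, 1-β)` are
independent; the probability is the convolution `∑_{i=0}^{m} P(ξ = i) P(η = m - i)`. -/
theorem G_eq_binom_prob (m n : ℕ) (α β : ℝ)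
    (hα0 : 0 ≤ α) (hα1 : α < 1) (hβ0 : 0 ≤ β) (hβ1 : β < 1) (hγ : 0 ≤ 1 - α - β) :
    G m n α β (1 - α - β) =
      ∑ i ∈ Finset.range (m + 1), binomPMF m α i * binomPMF n (1 - β) (m - i) := by
  have key : (∑ i ∈ Finset.range (m + 1), binomPMF m α i * binomPMF n (1 - β) (m - i))
      = G m n α β (1 - α - β) := by
    calc ∑ i ∈ Finset.range (m + 1), binomPMF m α i * binomPMF n (1 - β) (m - i)
        = ∑ j ∈ range (m + 1), ((m.choose j : ℝ) * (n.choose j : ℝ)) *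
            (α ^ (m - j) * ((1 - α) * (1 - β)) ^ j * β ^ (n - j)) := by
          rw [← Finset.sum_range_reflect]
          apply Finset.sum_congr rfl
          intro j hj
          simp only [Finset.mem_range] at hj
          have hj' : j ≤ m := by omega
          have e1 : m + 1 - 1 - j = m - j := by omega
          rw [e1]
          unfold binomPMF
          have e2 : m - (m - j) = j := by omega
          rw [e2, Nat.choose_symm hj']
          have e3 : (1 : ℝ) - (1 - β) = β := by ring
          rw [e3, mul_pow]
          ring
      _ = ∑ j ∈ range (m + 1), ∑ r ∈ range (j + 1),
            ((m.choose j : ℝ) * (n.choose j : ℝ)) * (α ^ (m - j) * β ^ (n - j)) *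
              ((1 - α - β) ^ r * (α * β) ^ (j - r) * (j.choose r : ℝ)) := by
          apply Finset.sum_congr rfl
          intro j _
          have hab : (1 - α) * (1 - β) = (1 - α - β) + α * β := by ring
          rw [hab, add_pow]
          simp only [Finset.mul_sum, Finset.sum_mul]
          apply Finset.sum_congr rfl
          intro r _
          ring
      _ = ∑ j ∈ range (m + 1), ∑ r ∈ range (m + 1),
            ((m.choose j : ℝ) * (n.choose j : ℝ)) * (α ^ (m - j) * β ^ (n - j)) *
              ((1 - α - β) ^ r * (α * β) ^ (j - r) * (j.choose r : ℝ)) := by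
          apply Finset.sum_congr rfl
          intro j hj
          simp only [Finset.mem_range] at hj
          apply Finset.sum_subset (Finset.range_subset_range.2 (by omega))
          intro r hr hr'
          simp only [Finset.mem_range] at hr hr'
          rw [Nat.choose_eq_zero_of_lt (show j < r by omega)]
          push_cast; ring
      _ = ∑ r ∈ range (m + 1), ∑ j ∈ range (m + 1),
            ((m.choose j : ℝ) * (n.choose j : ℝ)) * (α ^ (m - j) * β ^ (n - j)) *
              ((1 - α - β) ^ r * (α * β) ^ (j - r) * (j.choose r : ℝ)) :=
          Finset.sum_comm
      _ = ∑ r ∈ range (m + 1),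
            ((∑ j ∈ range (m + 1), m.choose j * n.choose j * j.choose r : ℕ) : ℝ) *
              (α ^ (m - r) * β ^ (n - r) * (1 - α - β) ^ r) := by
          apply Finset.sum_congr rfl
          intro r _
          push_cast
          rw [Finset.sum_mul]
          apply Finset.sum_congr rfl
          intro j hj
          simp only [Finset.mem_range] at hj
          by_cases hjr : r ≤ j
          · by_cases hjn : j ≤ n
            · have h1 : α ^ (m - j) * α ^ (j - r) = α ^ (m - r) := by
                rw [← pow_add]; congr 1; omega
              have h2 : β ^ (n - j) * β ^ (j - r) = β ^ (n - r) := by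
                rw [← pow_add]; congr 1; omega
              calc ((m.choose j : ℝ) * (n.choose j : ℝ)) *
                    (α ^ (m - j) * β ^ (n - j)) *
                    ((1 - α - β) ^ r * (α * β) ^ (j - r) * (j.choose r : ℝ))
                  = (m.choose j : ℝ) * (n.choose j : ℝ) * (j.choose r : ℝ) *
                      (1 - α - β) ^ r * (α ^ (m - j) * α ^ (j - r)) *
                      (β ^ (n - j) * β ^ (j - r)) := by rw [mul_pow]; ring
                _ = (m.choose j : ℝ) * (n.choose j : ℝ) * (j.choose r : ℝ) *
                      (1 - α - β) ^ r * α ^ (m - r) * β ^ (n - r) := by rw [h1, h2]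
                _ = (m.choose j : ℝ) * (n.choose j : ℝ) * (j.choose r : ℝ) *
                      (α ^ (m - r) * β ^ (n - r) * (1 - α - β) ^ r) := by ring
            · rw [Nat.choose_eq_zero_of_lt (show n < j by omega)]
              push_cast; ring
          · rw [Nat.choose_eq_zero_of_lt (show j < r by omega)]
            push_cast; ring
      _ = ∑ r ∈ range (min m n + 1),
            ((∑ j ∈ range (m + 1), m.choose j * n.choose j * j.choose r : ℕ) : ℝ) *
              (α ^ (m - r) * β ^ (n - r) * (1 - α - β) ^ r) := by
          symm
          apply Finset.sum_subset (Finset.range_subset_range.2 (by omega))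
          intro r hr hr'
          simp only [Finset.mem_range] at hr hr'
          have hzero : ∑ j ∈ range (m + 1), m.choose j * n.choose j * j.choose r = 0 := by
            apply Finset.sum_eq_zero
            intro j hj
            simp only [Finset.mem_range] at hj
            by_cases h : j ≤ n
            · rw [Nat.choose_eq_zero_of_lt (show j < r by omega), Nat.mul_zero]
            · rw [Nat.choose_eq_zero_of_lt (show n < j by omega), Nat.mul_zero,
                Nat.zero_mul]
          rw [hzero]
          push_cast; ring
      _ = G m n α β (1 - α - β) := by
          unfold G
          apply Finset.sum_congr rfl
          intro r hr
          simp only [Finset.mem_range] at hr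
          have hrm : r ≤ m := by omega
          have hrn : r ≤ n := by omega
          rw [choose_vandermonde m n r hrm hrn, factorial_div_eq m n r hrm hrn]
          push_cast; ring
  exact key.symm
end

section
/- Under the assumptions of the binomial representation (0 ≤ α, β < 1, γ = 1 - α - β ≥ 0), the two binomial representations agree: P(ξ_m^{(α)} + η_n^{(1-β)} = m) = P(ξ_n^{(β)} + η_m^{(1-α)} = n), where ξ_k^{(ν)} ~ Binomial(k, ν) and η_ℓ^{(μ)} ~ Binomial(ℓ, μ) are independent in each pair. -/
/-- The two binomial representations agree: for `0 ≤ α, β < 1` with `α + β ≤ 1`,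
`P(ξ_m^{(α)} + η_n^{(1-β)} = m) = P(ξ_n^{(β)} + η_m^{(1-α)} = n)`, each probability written
as the convolution of the corresponding independent binomial pmfs. -/
theorem binom_repr_symm (m n : ℕ) (α β : ℝ)
    (hα0 : 0 ≤ α) (hα1 : α < 1) (hβ0 : 0 ≤ β) (hβ1 : β < 1) (hγ : 0 ≤ 1 - α - β) :
    ∑ i ∈ Finset.range (m + 1), binomPMF m α i * binomPMF n (1 - β) (m - i) =
      ∑ i ∈ Finset.range (n + 1), binomPMF n β i * binomPMF m (1 - α) (n - i) := by
  have key : ∀ (M N : ℕ) (a b : ℝ),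
      ∑ i ∈ Finset.range (M + 1), binomPMF M a i * binomPMF N (1 - b) (M - i)
      = ∑ i ∈ Finset.range (M + N + 1),
          (M.choose i : ℝ) * (N.choose i) * a ^ (M - i) * (1 - a) ^ i
            * b ^ (N - i) * (1 - b) ^ i := by
    intro M N a b
    rw [← Finset.sum_range_reflect]
    simp only [Nat.add_sub_cancel]
    have h1 : ∀ i ∈ Finset.range (M + 1),
        binomPMF M a (M - i) * binomPMF N (1 - b) (M - (M - i))
        = (M.choose i : ℝ) * (N.choose i) * a ^ (M - i) * (1 - a) ^ i
            * b ^ (N - i) * (1 - b) ^ i := by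
      intro i hi
      simp only [Finset.mem_range] at hi
      have hiM : i ≤ M := by omega
      unfold binomPMF
      rw [Nat.sub_sub_self hiM, Nat.choose_symm hiM, sub_sub_cancel]
      ring
    rw [Finset.sum_congr rfl h1]
    apply Finset.sum_subset
    · intro x hx
      simp only [Finset.mem_range] at *
      omega
    · intro x hx hx'
      simp only [Finset.mem_range] at *
      have : M.choose x = 0 := Nat.choose_eq_zero_of_lt (by omega)
      simp [this]
  rw [key m n α β, key n m β α]
  rw [show n + m + 1 = m + n + 1 by omega]
  exact Finset.sum_congr rfl fun i _ => by ring
end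

section
/- For every x > 0, the exponential integral E₁(x) := ∫_x^∞ (e^{-u}/u) du satisfies the two-sided bound (1/2) e^{-x} log(1 + 2/x) < E₁(x) < e^{-x} log(1 + 1/x). -/
open MeasureTheory

open Set Filter Real


lemma continuousOn_expIntegrand :
    ContinuousOn (fun u => Real.exp (-u) / u) {u : ℝ | u ≠ 0} :=
  ContinuousOn.div (Real.continuous_exp.comp continuous_neg).continuousOn
    continuousOn_id (fun _ hu => hu)

lemma integrableOn_expInt {a : ℝ} (ha : 0 < a) :
    IntegrableOn (fun u => Real.exp (-u) / u) (Set.Ioi a) := by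
  have hmeas : AEStronglyMeasurable (fun u => Real.exp (-u) / u)
      (volume.restrict (Set.Ioi a)) :=
    (continuousOn_expIntegrand.mono
      (fun u (hu : u ∈ Set.Ioi a) => ne_of_gt (ha.trans hu))).aestronglyMeasurable
      measurableSet_Ioi
  refine Integrable.mono' ((exp_neg_integrableOn_Ioi a one_pos).const_mul (1/a)) hmeas ?_
  filter_upwards [ae_restrict_mem measurableSet_Ioi] with u hu
  have hu0 : 0 < u := ha.trans hu
  rw [Real.norm_eq_abs, abs_of_nonneg (by positivity), neg_one_mul]
  rw [div_le_iff₀ hu0, mul_comm (1/a), mul_assoc]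
  have : (1:ℝ) ≤ 1/a * u := by rw [one_div, inv_mul_eq_div, le_div_iff₀ ha]; linarith [le_of_lt (Set.mem_Ioi.mp hu)]
  nlinarith [Real.exp_pos (-u)]



/-- Exponential integral `E₁(x) = ∫_x^∞ e^{-u}/u du`. -/
noncomputable def expInt (x : ℝ) : ℝ := ∫ u in Set.Ioi x, Real.exp (-u) / u

lemma expInt_split {a b : ℝ} (ha : 0 < a) (hab : a ≤ b) :
    expInt a = (∫ u in a..b, Real.exp (-u) / u) + expInt b := by
  have hb : 0 < b := lt_of_lt_of_le ha hab
  rw [intervalIntegral.integral_of_le hab]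
  rw [expInt, expInt, ← Set.Ioc_union_Ioi_eq_Ioi hab]
  exact setIntegral_union Set.Ioc_disjoint_Ioi_same measurableSet_Ioi
    ((integrableOn_expInt ha).mono_set Set.Ioc_subset_Ioi_self) (integrableOn_expInt hb)

lemma expInt_hasDerivAt {x : ℝ} (hx : 0 < x) :
    HasDerivAt expInt (-(Real.exp (-x) / x)) x := by
  have hmem : Set.Ioi (0:ℝ) ∈ nhds x := Ioi_mem_nhds hx
  have heq : expInt =ᶠ[nhds x]
      fun t => expInt x - ∫ u in x..t, Real.exp (-u) / u := by
    filter_upwards [hmem] with t ht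
    rcases le_total x t with h | h
    · rw [expInt_split hx h]; ring
    · rw [expInt_split ht h, intervalIntegral.integral_symm]; ring
  have hopen : IsOpen {u : ℝ | u ≠ 0} := isOpen_ne_fun continuous_id continuous_const
  have hxmem : x ∈ {u : ℝ | u ≠ 0} := hx.ne'
  have hd : HasDerivAt (fun t => expInt x - ∫ u in x..t, Real.exp (-u) / u)
      (-(Real.exp (-x) / x)) x := by
    have := intervalIntegral.integral_hasDerivAt_right
      (f := fun u => Real.exp (-u) / u) (a := x) (b := x)
      (by simp [IntervalIntegrable])
      (continuousOn_expIntegrand.stronglyMeasurableAtFilter hopen x hxmem)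
      (continuousOn_expIntegrand.continuousAt (hopen.mem_nhds hxmem))
    simpa using this.const_sub (expInt x)
  exact hd.congr_of_eventuallyEq heq

lemma expInt_nonneg {x : ℝ} (hx : 0 < x) : 0 ≤ expInt x :=
  setIntegral_nonneg measurableSet_Ioi fun u hu => by
    have : 0 < u := hx.trans hu; positivity

lemma expInt_le {x : ℝ} (hx : 0 < x) : expInt x ≤ Real.exp (-x) / x := by
  have h : expInt x ≤ ∫ u in Set.Ioi x, Real.exp (-u) / x := by
    refine setIntegral_mono_on (integrableOn_expInt hx)
      (((exp_neg_integrableOn_Ioi x one_pos).congr_fun (fun u _ => by rw [neg_one_mul]) measurableSet_Ioi).div_const x)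
      measurableSet_Ioi fun u hu => ?_
    have hu0 : 0 < u := hx.trans hu
    exact div_le_div_of_nonneg_left (Real.exp_pos _).le hx (le_of_lt hu)
  calc expInt x ≤ ∫ u in Set.Ioi x, Real.exp (-u) / x := h
    _ = (∫ u in Set.Ioi x, Real.exp (-u)) / x := by rw [integral_div]
    _ = Real.exp (-x) / x := by rw [integral_exp_neg_Ioi]

lemma expInt_tendsto : Tendsto expInt atTop (nhds 0) := by
  have h1 : Tendsto (fun x : ℝ => Real.exp (-x) / x) atTop (nhds 0) := by
    have := Real.tendsto_exp_neg_atTop_nhds_zero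
    have h2 : Tendsto (fun x : ℝ => x⁻¹) atTop (nhds 0) := tendsto_inv_atTop_zero
    simpa [div_eq_mul_inv] using this.mul h2
  refine squeeze_zero' (eventually_atTop.2 ⟨1, fun x hx => expInt_nonneg (by linarith)⟩)
    (eventually_atTop.2 ⟨1, fun x hx => expInt_le (by linarith)⟩) h1

-- 2 log y < y - 1/y for y > 1
lemma two_log_lt {y : ℝ} (hy : 1 < y) : 2 * Real.log y < y - 1/y := by
  set g : ℝ → ℝ := fun y => y - 1/y - 2 * Real.log y with hg
  have hmono : StrictMonoOn g (Set.Ici 1) := by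
    refine strictMonoOn_of_deriv_pos (convex_Ici 1) ?_ ?_
    · refine ContinuousOn.sub (ContinuousOn.sub continuousOn_id ?_) ?_
      · exact ContinuousOn.div continuousOn_const continuousOn_id fun t ht =>
          ne_of_gt (lt_of_lt_of_le one_pos ht)
      · exact (continuousOn_const.mul (Real.continuousOn_log.mono
          fun t (ht : t ∈ Set.Ici 1) => ne_of_gt (lt_of_lt_of_le one_pos ht)))
    · intro t ht
      rw [interior_Ici] at ht
      have ht0 : 0 < t := lt_trans one_pos ht
      have h1 : HasDerivAt (fun y : ℝ => 1/y) (-(t^2)⁻¹) t := by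
        simp only [one_div]; exact hasDerivAt_inv ht0.ne'
      have hd : HasDerivAt g (1 - (-(t^2)⁻¹) - 2 * t⁻¹) t :=
        ((hasDerivAt_id t).sub h1).sub ((Real.hasDerivAt_log ht0.ne').const_mul 2)
      rw [hd.deriv]
      have he : 1 - (-(t^2)⁻¹) - 2 * t⁻¹ = (1 - t⁻¹)^2 := by field_simp; ring
      rw [he]
      have : t⁻¹ < 1 := inv_lt_one_of_one_lt₀ ht
      exact pow_pos (by linarith) 2
  have := hmono (Set.self_mem_Ici) (Set.mem_Ici.2 hy.le) hy
  simp only [hg] at this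
  norm_num at this
  rw [one_div]
  linarith

lemma log_lt_trap {t : ℝ} (ht : 0 < t) :
    Real.log (1 + 2/t) < 1/t + 1/(t+2) := by
  set y := Real.sqrt ((t+2)/t) with hy
  have ht2 : (0:ℝ) < t + 2 := by linarith
  have hfrac : 1 < (t+2)/t := by rw [lt_div_iff₀ ht]; linarith
  have hy1 : 1 < y := by
    rw [hy, show (1:ℝ) = Real.sqrt 1 by simp]
    exact Real.sqrt_lt_sqrt one_pos.le hfrac
  have hy0 : 0 < y := lt_trans one_pos hy1
  have hysq : y^2 = (t+2)/t := Real.sq_sqrt (by positivity)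
  have hlog : Real.log (1 + 2/t) = 2 * Real.log y := by
    rw [show 1 + 2/t = (t+2)/t by field_simp, ← hysq, Real.log_pow]
    push_cast; ring
  have hkey := two_log_lt hy1
  rw [hlog]
  set s := Real.sqrt (t*(t+2)) with hs
  have hs0 : 0 < s := Real.sqrt_pos.2 (by positivity)
  have hssq : s^2 = t*(t+2) := Real.sq_sqrt (by positivity)
  have hty : t * y = s := by
    rw [hy, hs, ← Real.sqrt_sq ht.le, ← Real.sqrt_mul (sq_nonneg t)]
    congr 1; field_simp; rw [Real.sq_sqrt (sq_nonneg t)]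
  have h2 : y - 1/y = 2 / s := by
    rw [← hty, eq_div_iff (by positivity : t*y ≠ 0)]
    have he : (y - 1/y) * (t*y) = y^2 * t - t := by field_simp
    rw [he, hysq]; field_simp; ring
  have hsle : s ≤ t + 1 := by
    rw [hs, show t + 1 = Real.sqrt ((t+1)^2) by rw [Real.sqrt_sq (by linarith)]]
    exact Real.sqrt_le_sqrt (by nlinarith)
  have h3 : 2 / s ≤ 1/t + 1/(t+2) := by
    rw [div_add_div _ _ ht.ne' ht2.ne']
    rw [div_le_div_iff₀ hs0 (by positivity)]
    have : t * (t+2) = s^2 := hssq.symm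
    nlinarith
  linarith [h2 ▸ hkey]

lemma inv_lt_log {x : ℝ} (hx : 0 < x) : 1/(x+1) < Real.log (1 + 1/x) := by
  have h := Real.log_lt_sub_one_of_pos (x := x/(x+1)) (by positivity)
    (by intro h; rw [div_eq_one_iff_eq (by positivity : x+(1:ℝ) ≠ 0)] at h; linarith)
  have he : Real.log (x/(x+1)) = - Real.log (1 + 1/x) := by
    rw [← Real.log_inv]
    congr 1
    field_simp
  rw [he] at h
  have : x/(x+1) - 1 = -(1/(x+1)) := by field_simp; ring
  rw [this] at h
  linarith

lemma pos_of_strictAntiOn_tendsto {f : ℝ → ℝ} {x : ℝ}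
    (hanti : StrictAntiOn f (Set.Ici x)) (hlim : Tendsto f atTop (nhds 0)) :
    0 < f x := by
  have h1 : f (x+1) < f x := hanti Set.self_mem_Ici (by simp) (by linarith)
  have h2 : (0:ℝ) ≤ f (x+1) := by
    refine le_of_tendsto hlim ?_
    filter_upwards [eventually_ge_atTop (x+2)] with y hy
    exact (hanti (by simp : x + 1 ∈ Set.Ici x) (by simp only [Set.mem_Ici]; linarith) (by linarith)).le
  linarith

lemma hasDerivAt_log_one_add_div {c t : ℝ} (hc : 0 < c) (ht : 0 < t) :
    HasDerivAt (fun t : ℝ => Real.log (1 + c/t)) (-c/(t*(t+c))) t := by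
  have h1 : HasDerivAt (fun t : ℝ => 1 + c/t) (c * -(t^2)⁻¹) t := by
    have : HasDerivAt (fun t : ℝ => t⁻¹) (-(t^2)⁻¹) t := hasDerivAt_inv ht.ne'
    simpa [div_eq_mul_inv] using (this.const_mul c).const_add 1
  have hne : 1 + c/t ≠ 0 := by positivity
  have := h1.log hne
  convert this using 1
  field_simp
lemma hasDerivAt_exp_neg (t : ℝ) : HasDerivAt (fun t : ℝ => Real.exp (-t)) (-Real.exp (-t)) t := by
  simpa using (hasDerivAt_neg t).exp

lemma hasDerivAt_G {t : ℝ} (ht : 0 < t) :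
    HasDerivAt (fun t => Real.exp (-t) * Real.log (1+1/t) - expInt t)
      (Real.exp (-t) * (1/(t+1) - Real.log (1+1/t))) t := by
  have h1 := (hasDerivAt_exp_neg t).mul (hasDerivAt_log_one_add_div one_pos ht)
  have h2 := h1.sub (expInt_hasDerivAt ht)
  refine h2.congr_deriv ?_
  have hne : t + 1 ≠ 0 := by positivity
  field_simp
  ring

lemma hasDerivAt_F {t : ℝ} (ht : 0 < t) :
    HasDerivAt (fun t => expInt t - 1/2 * Real.exp (-t) * Real.log (1+2/t))
      (Real.exp (-t) * (1/2 * Real.log (1+2/t) - 1/2 * (1/t + 1/(t+2)))) t := by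
  have h1 := ((hasDerivAt_exp_neg t).mul (hasDerivAt_log_one_add_div two_pos ht)).const_mul (1/2)
  have h2 := (expInt_hasDerivAt ht).sub (by simpa [mul_assoc] using h1 :
    HasDerivAt (fun t => 1/2 * Real.exp (-t) * Real.log (1+2/t))
      (1/2 * (-Real.exp (-t) * Real.log (1+2/t) + Real.exp (-t) * (-2/(t*(t+2))))) t)
  refine h2.congr_deriv ?_
  have hne : t + 2 ≠ 0 := by positivity
  field_simp
  ring

lemma tendsto_exp_mul_log {c : ℝ} :
    Tendsto (fun t : ℝ => Real.exp (-t) * Real.log (1 + c/t)) atTop (nhds 0) := by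
  have hd : Tendsto (fun t : ℝ => c/t) atTop (nhds 0) :=
    Tendsto.div_atTop tendsto_const_nhds tendsto_id
  have hlog : Tendsto (fun t : ℝ => Real.log (1 + c/t)) atTop (nhds 0) := by
    have h1 : Tendsto (fun t : ℝ => 1 + c/t) atTop (nhds 1) := by
      simpa using tendsto_const_nhds.add hd
    have := (Real.continuousAt_log one_ne_zero).tendsto.comp h1
    simpa [Real.log_one, Function.comp_def] using this
  have hexp : Tendsto (fun t : ℝ => Real.exp (-t)) atTop (nhds 0) :=
    Real.tendsto_exp_neg_atTop_nhds_zero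
  simpa using hexp.mul hlog


/-- For every `x > 0`, `(1/2) e^{-x} log(1 + 2/x) < E₁(x) < e^{-x} log(1 + 1/x)`. -/
theorem expInt_bounds (x : ℝ) (hx : 0 < x) :
    (1 / 2) * Real.exp (-x) * Real.log (1 + 2 / x) < expInt x ∧
      expInt x < Real.exp (-x) * Real.log (1 + 1 / x) := by
  constructor
  · set F : ℝ → ℝ := fun t => expInt t - 1/2 * Real.exp (-t) * Real.log (1+2/t) with hF
    have hanti : StrictAntiOn F (Set.Ici x) := by
      refine strictAntiOn_of_deriv_neg (convex_Ici x) ?_ ?_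
      · intro t ht
        exact (hasDerivAt_F (lt_of_lt_of_le hx ht)).differentiableAt.continuousAt.continuousWithinAt
      · intro t ht
        rw [interior_Ici] at ht
        have ht0 : 0 < t := hx.trans ht
        rw [(hasDerivAt_F ht0).deriv]
        exact mul_neg_of_pos_of_neg (Real.exp_pos _) (by linarith [log_lt_trap ht0])
    have hlim : Tendsto F atTop (nhds 0) := by
      have := expInt_tendsto.sub (tendsto_exp_mul_log (c := 2).const_mul (1/2))
      simpa [hF, mul_assoc] using this
    have := pos_of_strictAntiOn_tendsto hanti hlim
    simp only [hF] at this
    linarith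
  · set G : ℝ → ℝ := fun t => Real.exp (-t) * Real.log (1+1/t) - expInt t with hG
    have hanti : StrictAntiOn G (Set.Ici x) := by
      refine strictAntiOn_of_deriv_neg (convex_Ici x) ?_ ?_
      · intro t ht
        exact (hasDerivAt_G (lt_of_lt_of_le hx ht)).differentiableAt.continuousAt.continuousWithinAt
      · intro t ht
        rw [interior_Ici] at ht
        have ht0 : 0 < t := hx.trans ht
        rw [(hasDerivAt_G ht0).deriv]
        exact mul_neg_of_pos_of_neg (Real.exp_pos _) (by linarith [inv_lt_log ht0])
    have hlim : Tendsto G atTop (nhds 0) := by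
      have := (tendsto_exp_mul_log (c := 1)).sub expInt_tendsto
      simpa [hG] using this
    have := pos_of_strictAntiOn_tendsto hanti hlim
    simp only [hG] at this
    linarith
end

section
/- Let (ε_{k,ℓ}) be independent with mean 0 and variance 1 and let X solve the model with parameters (1, β, -β) for some β ∈ [0,1): X_{k,ℓ} = X_{k-1,ℓ} + β X_{k,ℓ-1} - β X_{k-1,ℓ-1} + ε_{k,ℓ} with zero boundary. Then X_{k,ℓ} = ∑_{i=1}^k ∑_{j=1}^ℓ β^{ℓ-j} ε_{i,j}, and consequently Cov(X_{k₁,ℓ₁}, X_{k₂,ℓ₂}) = min(k₁,k₂) · β^{|ℓ₁-ℓ₂|} · (1 - β^{2 min(ℓ₁,ℓ₂)})/(1 - β²). -/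
open MeasureTheory ProbabilityTheory

lemma aux_sum_step (β : ℝ) (f : ℕ × ℕ → ℝ) (k l : ℕ) :
    ∑ i ∈ Finset.Icc 1 (k+1), ∑ j ∈ Finset.Icc 1 (l+1), β ^ (l+1-j) * f (i, j) =
      (∑ i ∈ Finset.Icc 1 k, ∑ j ∈ Finset.Icc 1 (l+1), β ^ (l+1-j) * f (i, j))
      + β * ∑ i ∈ Finset.Icc 1 (k+1), ∑ j ∈ Finset.Icc 1 l, β ^ (l-j) * f (i, j)
      - β * ∑ i ∈ Finset.Icc 1 k, ∑ j ∈ Finset.Icc 1 l, β ^ (l-j) * f (i, j)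
      + f (k+1, l+1) := by
  have hb : ∀ a : ℕ, β * ∑ i ∈ Finset.Icc 1 a, ∑ j ∈ Finset.Icc 1 l, β ^ (l-j) * f (i, j)
      = ∑ i ∈ Finset.Icc 1 a, ∑ j ∈ Finset.Icc 1 l, β ^ (l+1-j) * f (i, j) := by
    intro a
    rw [Finset.mul_sum]
    refine Finset.sum_congr rfl fun i _ => ?_
    rw [Finset.mul_sum]
    refine Finset.sum_congr rfl fun j hj => ?_
    have hj' : j ≤ l := (Finset.mem_Icc.mp hj).2
    rw [Nat.succ_sub hj', pow_succ, ← mul_assoc]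
    ring
  rw [hb, hb, Finset.sum_Icc_succ_top (by omega : 1 ≤ k + 1)]
  have h2 : ∑ j ∈ Finset.Icc 1 (l+1), β ^ (l+1-j) * f (k+1, j)
      = (∑ j ∈ Finset.Icc 1 l, β ^ (l+1-j) * f (k+1, j)) + f (k+1, l+1) := by
    rw [Finset.sum_Icc_succ_top (by omega : 1 ≤ l + 1)]
    simp
  rw [h2, Finset.sum_Icc_succ_top (by omega : 1 ≤ k + 1)
    (fun i => ∑ j ∈ Finset.Icc 1 l, β ^ (l+1-j) * f (i, j))]
  ring

lemma aux_geom (β : ℝ) (h : β ^ 2 ≠ 1) (n : ℕ) :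
    ∑ j ∈ Finset.Icc 1 n, (β ^ 2) ^ (n - j) = (1 - β ^ (2 * n)) / (1 - β ^ 2) := by
  induction n with
  | zero => simp
  | succ n ih =>
    have hsplit : ∑ j ∈ Finset.Icc 1 (n+1), (β ^ 2) ^ (n+1-j)
        = (∑ j ∈ Finset.Icc 1 n, (β ^ 2) ^ (n+1-j)) + 1 := by
      rw [Finset.sum_Icc_succ_top (by omega : 1 ≤ n + 1)]
      simp
    have hmul : ∑ j ∈ Finset.Icc 1 n, (β ^ 2) ^ (n+1-j)
        = β ^ 2 * ∑ j ∈ Finset.Icc 1 n, (β ^ 2) ^ (n-j) := by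
      rw [Finset.mul_sum]
      refine Finset.sum_congr rfl fun j hj => ?_
      have hj' : j ≤ n := (Finset.mem_Icc.mp hj).2
      rw [Nat.succ_sub hj', pow_succ]
      ring
    rw [hsplit, hmul, ih]
    have h1 : (1 : ℝ) - β ^ 2 ≠ 0 := by
      intro hc; apply h; linarith
    have hpow : β ^ (2 * (n + 1)) = β ^ (2 * n) * β ^ 2 := by
      rw [← pow_add]; ring_nf
    rw [hpow]
    field_simp
    ring

lemma aux_inner (β : ℝ) (h : β ^ 2 ≠ 1) (l₁ l₂ : ℕ) :
    ∑ j ∈ Finset.Icc 1 (min l₁ l₂), β ^ (l₁ - j) * β ^ (l₂ - j)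
      = β ^ (max l₁ l₂ - min l₁ l₂) * ((1 - β ^ (2 * min l₁ l₂)) / (1 - β ^ 2)) := by
  have hterm : ∀ j ∈ Finset.Icc 1 (min l₁ l₂),
      β ^ (l₁ - j) * β ^ (l₂ - j)
        = β ^ (max l₁ l₂ - min l₁ l₂) * (β ^ 2) ^ (min l₁ l₂ - j) := by
    intro j hj
    have hj' : j ≤ min l₁ l₂ := (Finset.mem_Icc.mp hj).2
    rw [← pow_add, ← pow_mul, ← pow_add]
    congr 1
    omega
  rw [Finset.sum_congr rfl hterm, ← Finset.mul_sum, aux_geom β h]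

/-- Edge case `(α,β,γ) = (1, β, -β)` with `β ∈ [0,1)` and independent standardized
innovations: `X_{k,ℓ} = ∑_{i=1}^k ∑_{j=1}^ℓ β^{ℓ-j} ε_{i,j}`, and consequently
`Cov(X_{k₁,ℓ₁}, X_{k₂,ℓ₂}) = min(k₁,k₂) β^{|ℓ₁-ℓ₂|} (1 - β^{2 min(ℓ₁,ℓ₂)})/(1-β²)`. -/
theorem edge_repr_and_covariance {Ω : Type*} [MeasureSpace Ω]
    [IsProbabilityMeasure (ℙ : Measure Ω)]
    (β : ℝ) (hβ0 : 0 ≤ β) (hβ1 : β < 1)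
    (ε : ℕ × ℕ → Ω → ℝ) (hmeas : ∀ p, Measurable (ε p))
    (hL2 : ∀ p, MemLp (ε p) 2 ℙ)
    (hindep : iIndepFun ε ℙ)
    (hmean : ∀ p, ∫ ω, ε p ω = 0)
    (hvar : ∀ p, ∫ ω, (ε p ω) ^ 2 = 1)
    (X : ℕ → ℕ → Ω → ℝ)
    (hbd1 : ∀ k, X k 0 = 0) (hbd2 : ∀ l, X 0 l = 0)
    (hrec : ∀ k l, X (k + 1) (l + 1) = fun ω =>
      X k (l + 1) ω + β * X (k + 1) l ω - β * X k l ω + ε (k + 1, l + 1) ω) :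
    (∀ k l ω, X k l ω =
        ∑ i ∈ Finset.Icc 1 k, ∑ j ∈ Finset.Icc 1 l, β ^ (l - j) * ε (i, j) ω) ∧
      (∀ k₁ l₁ k₂ l₂ : ℕ, 0 < k₁ → 0 < l₁ → 0 < k₂ → 0 < l₂ →
        (∫ ω, X k₁ l₁ ω * X k₂ l₂ ω) - (∫ ω, X k₁ l₁ ω) * (∫ ω, X k₂ l₂ ω) =
          (min k₁ k₂ : ℝ) * β ^ (max l₁ l₂ - min l₁ l₂) *
            ((1 - β ^ (2 * min l₁ l₂)) / (1 - β ^ 2))) := by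
  -- Part 1: representation
  have hrep : ∀ k l ω, X k l ω =
      ∑ i ∈ Finset.Icc 1 k, ∑ j ∈ Finset.Icc 1 l, β ^ (l - j) * ε (i, j) ω := by
    intro k
    induction k with
    | zero => intro l ω; simp [hbd2]
    | succ k ih =>
      intro l
      induction l with
      | zero => intro ω; simp [hbd1]
      | succ l ihl =>
        intro ω
        rw [hrec k l]
        simp only
        rw [ih (l+1) ω, ihl ω, ih l ω]
        exact (aux_sum_step β (fun p => ε p ω) k l).symm
  refine ⟨hrep, ?_⟩
  intro k₁ l₁ k₂ l₂ _ _ _ _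
  have hint : ∀ p, Integrable (ε p) ℙ := fun p => (hL2 p).integrable one_le_two
  -- product-form representation
  have hX : ∀ k l, X k l = fun ω =>
      ∑ p ∈ Finset.Icc 1 k ×ˢ Finset.Icc 1 l, β ^ (l - p.2) * ε p ω := by
    intro k l; funext ω
    rw [hrep k l ω, Finset.sum_product]
  -- mean zero
  have hmean0 : ∀ k l, ∫ ω, X k l ω = 0 := by
    intro k l
    rw [hX k l]
    rw [integral_finset_sum _ (fun p _ => (hint p).const_mul _)]
    simp [integral_const_mul, hmean]
  -- products of innovations
  have hprod : ∀ p q : ℕ × ℕ, Integrable (fun ω => ε p ω * ε q ω) ℙ := by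
    intro p q
    by_cases hpq : p = q
    · subst hpq
      simpa [pow_two] using (hL2 p).integrable_sq
    · exact (hindep.indepFun hpq).integrable_mul (hint p) (hint q)
  have hee : ∀ p q : ℕ × ℕ, (∫ ω, ε p ω * ε q ω) = if p = q then 1 else 0 := by
    intro p q
    by_cases hpq : p = q
    · rw [if_pos hpq]; subst hpq
      simpa [pow_two] using hvar p
    · rw [if_neg hpq]
      have h := (hindep.indepFun hpq).integral_fun_mul_eq_mul_integral (hint p).aestronglyMeasurable
        (hint q).aestronglyMeasurable
      have h' : ∫ ω, ε p ω * ε q ω = (∫ ω, ε p ω) * ∫ ω, ε q ω := h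
      rw [h', hmean, hmean, mul_zero]
  -- expand the product integral
  set S₁ := Finset.Icc 1 k₁ ×ˢ Finset.Icc 1 l₁ with hS₁
  set S₂ := Finset.Icc 1 k₂ ×ˢ Finset.Icc 1 l₂ with hS₂
  have hkey : ∫ ω, X k₁ l₁ ω * X k₂ l₂ ω
      = ∑ p ∈ S₁, ∑ q ∈ S₂, β ^ (l₁ - p.2) * β ^ (l₂ - q.2) * ∫ ω, ε p ω * ε q ω := by
    rw [hX k₁ l₁, hX k₂ l₂]
    simp only
    have hexp : ∀ ω : Ω, (∑ p ∈ S₁, β ^ (l₁ - p.2) * ε p ω) * (∑ q ∈ S₂, β ^ (l₂ - q.2) * ε q ω)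
        = ∑ p ∈ S₁, ∑ q ∈ S₂, β ^ (l₁ - p.2) * β ^ (l₂ - q.2) * (ε p ω * ε q ω) := by
      intro ω
      rw [Finset.sum_mul_sum]
      exact Finset.sum_congr rfl fun p _ => Finset.sum_congr rfl fun q _ => by ring
    simp_rw [← hS₁, ← hS₂, hexp]
    rw [integral_finset_sum _ (fun p _ => integrable_finset_sum _ (fun q _ =>
      ((hprod p q).const_mul _)))]
    refine Finset.sum_congr rfl fun p _ => ?_
    rw [integral_finset_sum _ (fun q _ => (hprod p q).const_mul _)]
    exact Finset.sum_congr rfl fun q _ => integral_const_mul _ _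
  -- collapse the double sum
  have hcollapse : ∑ p ∈ S₁, ∑ q ∈ S₂, β ^ (l₁ - p.2) * β ^ (l₂ - q.2) * ∫ ω, ε p ω * ε q ω
      = ∑ p ∈ S₁ ∩ S₂, β ^ (l₁ - p.2) * β ^ (l₂ - p.2) := by
    simp_rw [hee, mul_ite, mul_one, mul_zero]
    have h1 : ∀ p ∈ S₁, (∑ q ∈ S₂, if p = q then β ^ (l₁ - p.2) * β ^ (l₂ - q.2) else 0)
        = if p ∈ S₂ then β ^ (l₁ - p.2) * β ^ (l₂ - p.2) else 0 := by
      intro p _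
      rw [Finset.sum_ite_eq S₂ p (fun q => β ^ (l₁ - p.2) * β ^ (l₂ - q.2))]
    rw [Finset.sum_congr rfl h1, Finset.sum_ite_mem]
  have hSinter : S₁ ∩ S₂ = Finset.Icc 1 (min k₁ k₂) ×ˢ Finset.Icc 1 (min l₁ l₂) := by
    ext ⟨i, j⟩
    simp only [hS₁, hS₂, Finset.mem_inter, Finset.mem_product, Finset.mem_Icc]
    omega
  have hβ2 : β ^ 2 ≠ 1 := by nlinarith
  have hfinal : ∑ p ∈ S₁ ∩ S₂, β ^ (l₁ - p.2) * β ^ (l₂ - p.2)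
      = (min (k₁ : ℝ) (k₂ : ℝ)) * (β ^ (max l₁ l₂ - min l₁ l₂) *
          ((1 - β ^ (2 * min l₁ l₂)) / (1 - β ^ 2))) := by
    rw [hSinter, Finset.sum_product]
    have hc : ∀ x ∈ Finset.Icc 1 (min k₁ k₂),
        (∑ y ∈ Finset.Icc 1 (min l₁ l₂), β ^ (l₁ - ((x, y) : ℕ × ℕ).2) * β ^ (l₂ - ((x, y) : ℕ × ℕ).2))
          = β ^ (max l₁ l₂ - min l₁ l₂) * ((1 - β ^ (2 * min l₁ l₂)) / (1 - β ^ 2)) :=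
      fun x _ => aux_inner β hβ2 l₁ l₂
    rw [Finset.sum_congr rfl hc, Finset.sum_const, Nat.card_Icc]
    push_cast
    simp [nsmul_eq_mul]
  rw [hkey, hcollapse, hfinal, hmean0, hmean0]
  ring
end
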